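/- If σ is a separable density matrix on ℂ² ⊗ ℂ², then ⟨Φ⁺| σ |Φ⁺⟩ ≤ 1/2. -/

import Mathlib

open Matrix Kronecker
open scoped ComplexOrder

/-- A density matrix: positive semidefinite with unit trace. -/
def IsDensityMatrix {n : Type*} [Fintype n] [DecidableEq n]
    (ρ : Matrix n n ℂ) : Prop :=
  ρ.PosSemidef ∧ ρ.trace = 1

/-- Separability on `ℂ² ⊗ ℂ²`: a finite convex combination of product states. -/
def IsSeparableState (σ : Matrix (Fin 2 × Fin 2) (Fin 2 × Fin 2) ℂ) : Prop :=
  ∃ (k : ℕ) (w : Fin k → ℝ) (ρA ρB : Fin k → Matrix (Fin 2) (Fin 2) ℂ),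
    (∀ i, 0 ≤ w i) ∧ (∑ i, w i = 1) ∧
    (∀ i, IsDensityMatrix (ρA i)) ∧ (∀ i, IsDensityMatrix (ρB i)) ∧
    σ = ∑ i, (w i : ℂ) • (ρA i ⊗ₖ ρB i)

noncomputable def PhiPlus : (Fin 2 × Fin 2) → ℂ :=
  fun p => if p.1 = p.2 then ((Real.sqrt 2)⁻¹ : ℂ) else 0

/-! The fidelity with `Φ⁺` is linear in the state, so it suffices to bound it on product states
`A ⊗ B`, where it equals `tr (A Bᵀ) / 2`. For positive semidefinite `A`, `B` the 2×2 principal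
minors give `|A i j|² ≤ A i i A j j`, so by AM-GM `Re (A i j B i j) ≤ (A i i B j j + A j j B i i) / 2`;
summing over `i, j` gives `Re tr (A Bᵀ) ≤ tr A · tr B = 1`. -/

namespace Matrix.PosSemidef

variable {𝕜 n : Type*} [RCLike 𝕜] {A B : Matrix n n 𝕜}

theorem norm_apply_sq_le (hA : A.PosSemidef) (i j : n) :
    ‖A i j‖ ^ 2 ≤ RCLike.re (A i i) * RCLike.re (A j j) := by
  classical
  have hdet := (hA.submatrix ![i, j]).det_nonneg
  simp only [det_fin_two, submatrix_apply, cons_val_zero, cons_val_one] at hdet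
  rw [← hA.1.apply j i, RCLike.star_def, RCLike.mul_conj, ← hA.1.coe_re_apply_self i,
    ← hA.1.coe_re_apply_self j, ← RCLike.ofReal_mul, ← RCLike.ofReal_pow, ← RCLike.ofReal_sub,
    RCLike.ofReal_nonneg] at hdet
  linarith

theorem re_apply_mul_apply_le (hA : A.PosSemidef) (hB : B.PosSemidef) (i j : n) :
    RCLike.re (A i j * B i j) ≤
      (RCLike.re (A i i) * RCLike.re (B j j) + RCLike.re (A j j) * RCLike.re (B i i)) / 2 := by
  have hA_diag (k : n) : 0 ≤ RCLike.re (A k k) := (RCLike.nonneg_iff.mp hA.diag_nonneg).1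
  have hB_diag (k : n) : 0 ≤ RCLike.re (B k k) := (RCLike.nonneg_iff.mp hB.diag_nonneg).1
  have hsq : (‖A i j‖ * ‖B i j‖) ^ 2 ≤
      (RCLike.re (A i i) * RCLike.re (B j j)) * (RCLike.re (A j j) * RCLike.re (B i i)) := by
    rw [mul_pow]
    nlinarith [hA.norm_apply_sq_le i j, hB.norm_apply_sq_le i j, sq_nonneg ‖A i j‖,
      mul_nonneg (hA_diag i) (hA_diag j)]
  calc RCLike.re (A i j * B i j) ≤ ‖A i j‖ * ‖B i j‖ :=
        (RCLike.re_le_norm _).trans (norm_mul _ _).le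
    _ ≤ _ := by
        nlinarith [sq_nonneg (RCLike.re (A i i) * RCLike.re (B j j) -
            RCLike.re (A j j) * RCLike.re (B i i)),
          mul_nonneg (hA_diag i) (hB_diag j), mul_nonneg (hA_diag j) (hB_diag i),
          norm_nonneg (A i j), norm_nonneg (B i j)]

theorem re_trace_mul_transpose_le [Fintype n] (hA : A.PosSemidef) (hB : B.PosSemidef) :
    RCLike.re (A * Bᵀ).trace ≤ RCLike.re A.trace * RCLike.re B.trace := by
  set a : n → ℝ := fun i ↦ RCLike.re (A i i)
  set b : n → ℝ := fun i ↦ RCLike.re (B i i)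
  calc RCLike.re (A * Bᵀ).trace = ∑ i, ∑ j, RCLike.re (A i j * B i j) := by
        simp only [trace, diag, mul_apply, transpose_apply, map_sum]
    _ ≤ ∑ i, ∑ j, (a i * b j + a j * b i) / 2 := by
        gcongr with i _ j _
        exact hA.re_apply_mul_apply_le hB i j
    _ = (∑ i, a i) * ∑ j, b j := by
        simp only [add_div, Finset.sum_add_distrib, Finset.sum_mul_sum]
        rw [Finset.sum_comm (f := fun i j ↦ a j * b i / 2)]
        simp only [mul_comm (a _) (b _), ← Finset.sum_add_distrib, add_halves]
    _ = RCLike.re A.trace * RCLike.re B.trace := by simp only [trace, diag, map_sum, a, b]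

end Matrix.PosSemidef

theorem star_phiPlus_dotProduct_kronecker_mulVec (A B : Matrix (Fin 2) (Fin 2) ℂ) :
    star PhiPlus ⬝ᵥ (A ⊗ₖ B) *ᵥ PhiPlus = (A * Bᵀ).trace / 2 := by
  have hsqrt : ((Real.sqrt 2 : ℂ)⁻¹) ^ 2 = 2⁻¹ := by
    rw [inv_pow, ← Complex.ofReal_pow, Real.sq_sqrt zero_le_two, Complex.ofReal_ofNat]
  simp only [dotProduct, Pi.star_apply, PhiPlus, RCLike.star_def, mulVec, kroneckerMap_apply,
    mul_ite, mul_zero, Fintype.sum_prod_type, Finset.sum_ite_eq, Finset.mem_univ, ↓reduceIte,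
    Fin.sum_univ_two, map_inv₀, Complex.conj_ofReal, zero_ne_one, map_zero, zero_mul, add_zero,
    one_ne_zero, zero_add, trace, diag_apply, mul_apply, transpose_apply]
  linear_combination (A 0 0 * B 0 0 + A 0 1 * B 0 1 + A 1 0 * B 1 0 + A 1 1 * B 1 1) * hsqrt

theorem re_phiPlus_fidelity_kronecker_le {A B : Matrix (Fin 2) (Fin 2) ℂ}
    (hA : IsDensityMatrix A) (hB : IsDensityMatrix B) :
    (star PhiPlus ⬝ᵥ (A ⊗ₖ B) *ᵥ PhiPlus).re ≤ 1 / 2 := by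
  have htrace := hA.1.re_trace_mul_transpose_le hB.1
  rw [hA.2, hB.2, RCLike.one_re, mul_one] at htrace
  rw [star_phiPlus_dotProduct_kronecker_mulVec, Complex.div_ofNat_re]
  exact div_le_div_of_nonneg_right htrace zero_le_two

theorem separable_fidelity_bound_general (σ : Matrix (Fin 2 × Fin 2) (Fin 2 × Fin 2) ℂ)
    (hsep : IsSeparableState σ) :
    (star PhiPlus ⬝ᵥ σ.mulVec PhiPlus).re ≤ 1 / 2 := by
  obtain ⟨k, w, ρA, ρB, hw, hw_sum, hA, hB, rfl⟩ := hsep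
  calc (star PhiPlus ⬝ᵥ (∑ i, (w i : ℂ) • (ρA i ⊗ₖ ρB i)) *ᵥ PhiPlus).re
      = ∑ i, w i * (star PhiPlus ⬝ᵥ (ρA i ⊗ₖ ρB i) *ᵥ PhiPlus).re := by
        simp only [sum_mulVec, dotProduct_sum, smul_mulVec, dotProduct_smul, Complex.re_sum,
          smul_eq_mul, Complex.re_ofReal_mul]
    _ ≤ ∑ i, w i * (1 / 2) := by
        gcongr with i
        · exact hw i
        · exact re_phiPlus_fidelity_kronecker_le (hA i) (hB i)
    _ = 1 / 2 := by rw [← Finset.sum_mul, hw_sum, one_mul]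

theorem separable_fidelity_bound (σ : Matrix (Fin 2 × Fin 2) (Fin 2 × Fin 2) ℂ)
    (hσ : IsDensityMatrix σ) (hsep : IsSeparableState σ) :
    (star PhiPlus ⬝ᵥ σ.mulVec PhiPlus).re ≤ 1 / 2 :=
  separable_fidelity_bound_general σ hsep
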